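/- arXiv:1401.7634 — 4 statements merged into one kernel-verified Lean document; each statement's English description precedes it below -/
import Mathlib

section
/- Let (W, S) be a Coxeter system, and let S^f = {X ⊂ S | W_X is finite}. Define a relation ⪯ on W × S^f by declaring (u, X) ⪯ (v, Y) if and only if (1) X ⊂ Y, (2) v^{-1}u ∈ W_Y, and (3) v^{-1}u is (∅, X)-minimal. Then ⪯ is a partial order relation on W × S^f (reflexive, antisymmetric, and transitive). -/
/-!
Reflexivity is trivial, and antisymmetry holds because an element of `W_X` that is
`(∅, X)`-minimal must be `1`. Transitivity reduces to the additivity `ℓ(d y) = ℓ(d) + ℓ(y)` for `d`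
minimal in `d W_Y` and `y ∈ W_Y`, proved by induction on a `Y`-word for `y`: if appending a
letter `s` to `y` made `d y s` shorter but not `y s`, the exchange condition on a reduced word
of `d y` would delete a letter of `d`, making `d (y s y⁻¹)` shorter than `d`.

The exchange condition is derived by Tits' argument: `s_i ↦ ((t, e) ↦ (s_i t s_i, e + [t = s_i]))`
satisfies the Coxeter relations, so the parity of the number of occurrences of `t` in the right
inversion sequence of a word depends only on the element the word represents.
-/

open List

namespace CoxeterSystem

variable {B W : Type*} [Group W] {M : CoxeterMatrix B} (cs : CoxeterSystem M W)
local prefix:100 "s" => cs.simple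
local prefix:100 "π" => cs.wordProd
local prefix:100 "ris" => cs.rightInvSeq
local prefix:100 "ℓ" => cs.length

theorem reverse_alternatingWord_two_mul (i j : B) (m : ℕ) :
    (alternatingWord i j (2 * m)).reverse = alternatingWord j i (2 * m) := by
  apply List.ext_getElem (by simp)
  intro k hk _
  simp only [length_reverse, length_alternatingWord] at hk
  rw [getElem_reverse, getElem_alternatingWord _ _ _ _ (by simp; omega),
    getElem_alternatingWord _ _ _ _ hk]
  simp only [length_alternatingWord]
  grind

theorem alternatingWord_two_mul_add_one (i j : B) (m : ℕ) :
    alternatingWord i j (2 * (m + 1)) = i :: j :: alternatingWord i j (2 * m) := by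
  rw [show 2 * (m + 1) = 2 * m + 1 + 1 by ring, alternatingWord_succ', alternatingWord_succ']
  simp

theorem wordProd_alternatingWord_two_mul_add_one (i j : B) (k : ℕ) :
    π alternatingWord i j (2 * k + 1) = s j * (s i * s j) ^ k := by
  simp [prod_alternatingWord_eq_mul_pow, Nat.not_even_bit1, show (2 * k + 1) / 2 = k by omega]

theorem rightInvSeq_alternatingWord_two_mul (i j : B) (m : ℕ) :
    ris (alternatingWord i j (2 * m)) =
      ((range (2 * m)).map fun k => s j * (s i * s j) ^ k).reverse := by
  rw [← reverse_reverse (alternatingWord i j (2 * m)), rightInvSeq_reverse,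
    reverse_alternatingWord_two_mul]
  congr 1
  apply List.ext_getElem (by simp)
  intro k hk _
  simp only [length_leftInvSeq, length_alternatingWord] at hk
  rw [getElem_leftInvSeq_alternatingWord cs j i m k hk, getElem_map, getElem_range,
    wordProd_alternatingWord_two_mul_add_one]

theorem rightInvSeq_append (ω ω' : List B) :
    ris (ω ++ ω') = (ris ω).map (MulAut.conj (π ω')⁻¹) ++ ris ω' := by
  induction ω with
  | nil => simp
  | cons i ω ih =>
    rw [cons_append, rightInvSeq, ih, rightInvSeq, map_cons, cons_append, wordProd_append]
    simp [mul_assoc]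

section ReflectionParity

variable [DecidableEq W]

theorem even_count_rightInvSeq_braid_square (i j : B) (t : W) :
    Even ((ris (alternatingWord i j (2 * M i j))).count t) := by
  have hperiod : ∀ k, s j * (s i * s j) ^ (M i j + k) = s j * (s i * s j) ^ k := by
    intro k
    rw [pow_add, simple_mul_simple_pow, one_mul]
  rw [rightInvSeq_alternatingWord_two_mul, count_reverse, two_mul, range_add, map_append,
    map_map]
  simp only [Function.comp_def, hperiod, count_append]
  exact ⟨_, rfl⟩

def reflectionParityMap (i : B) : Function.End (W × ZMod 2) :=
  fun p => (s i * p.1 * s i, p.2 + if p.1 = s i then 1 else 0)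

theorem prod_map_reflectionParityMap_apply (ω : List B) (t : W) (e : ZMod 2) :
    (ω.map cs.reflectionParityMap).prod (t, e) =
      (π ω * t * (π ω)⁻¹, e + (ris ω).count t) := by
  induction ω generalizing e with
  | nil =>
    simp only [map_nil, prod_nil, wordProd_nil, rightInvSeq_nil, count_nil, one_mul, inv_one,
      mul_one, Nat.cast_zero, add_zero]
    rfl
  | cons i ω ih =>
    change cs.reflectionParityMap i ((ω.map cs.reflectionParityMap).prod (t, e)) = _
    have hconj : π ω * t * (π ω)⁻¹ = s i ↔ (π ω)⁻¹ * s i * π ω = t := by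
      constructor <;> intro h <;> rw [← h] <;> group
    rw [ih]
    simp only [reflectionParityMap, rightInvSeq, count_cons, wordProd_cons, beq_iff_eq, hconj]
    ext
    · simp [mul_assoc]
    · split_ifs <;> simp [add_assoc]

theorem isLiftable_reflectionParityMap : M.IsLiftable cs.reflectionParityMap := by
  intro i j
  have hpow : ∀ m, (cs.reflectionParityMap i * cs.reflectionParityMap j) ^ m =
      ((alternatingWord i j (2 * m)).map cs.reflectionParityMap).prod := by
    intro m
    induction m with
    | zero => simp [alternatingWord]
    | succ m ih => rw [pow_succ', ih, alternatingWord_two_mul_add_one]; simp [mul_assoc]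
  funext ⟨t, e⟩
  rw [hpow, prod_map_reflectionParityMap_apply]
  have hone : π alternatingWord i j (2 * M i j) = 1 := by
    simp [prod_alternatingWord_eq_mul_pow]
  rw [hone, (ZMod.natCast_eq_zero_iff_even).2 (cs.even_count_rightInvSeq_braid_square i j t)]
  simp only [one_mul, inv_one, mul_one, add_zero]
  rfl

theorem lift_reflectionParityMap_wordProd (ω : List B) :
    cs.lift ⟨_, cs.isLiftable_reflectionParityMap⟩ (π ω) =
      (ω.map cs.reflectionParityMap).prod := by
  rw [wordProd, map_list_prod, map_map]
  congr 1
  exact map_congr_left fun i _ => lift_apply_simple cs _ i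

theorem natCast_count_rightInvSeq_eq_of_wordProd_eq {ω ω' : List B} (h : π ω = π ω') (t : W) :
    ((ris ω).count t : ZMod 2) = (ris ω').count t := by
  have := congrArg (fun φ : Function.End (W × ZMod 2) => (φ (t, 0)).2)
    ((cs.lift_reflectionParityMap_wordProd ω).symm.trans
      (h ▸ cs.lift_reflectionParityMap_wordProd ω'))
  simpa [prod_map_reflectionParityMap_apply] using this

end ReflectionParity

theorem simple_mem_rightInvSeq_of_isRightDescent {ω : List B} {i : B}
    (h : cs.IsRightDescent (π ω) i) : s i ∈ ris ω := by
  classical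
  obtain ⟨κ, hκ, hκω⟩ := cs.exists_isReduced (π ω * s i)
  have hprod : π (κ.concat i) = π ω := by
    rw [wordProd_concat, ← hκω, mul_assoc, simple_mul_simple_self, mul_one]
  have hreduced : cs.IsReduced (κ.concat i) := by
    rw [IsReduced, hprod, length_concat, ← hκ.eq, ← hκω, cs.isRightDescent_iff.mp h]
  have hcount : (ris (κ.concat i)).count (s i) = 1 :=
    count_eq_one_of_mem hreduced.nodup_rightInvSeq (by simp only [rightInvSeq_concat]; simp)
  have hparity := cs.natCast_count_rightInvSeq_eq_of_wordProd_eq hprod (s i)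
  rw [hcount] at hparity
  refine count_pos_iff.mp (Nat.pos_of_ne_zero fun h0 => ?_)
  rw [h0] at hparity
  exact absurd hparity (by decide)

theorem isRightInversion_or_isRightDescent_of_length_mul_eq {x y : W} {i : B}
    (hxy : ℓ (x * y) = ℓ x + ℓ y) (h : cs.IsRightDescent (x * y) i) :
    cs.IsRightInversion x (y * s i * y⁻¹) ∨ cs.IsRightDescent y i := by
  obtain ⟨κ, hκ, rfl⟩ := cs.exists_isReduced x
  obtain ⟨μ, hμ, rfl⟩ := cs.exists_isReduced y
  have hκμ : cs.IsReduced (κ ++ μ) := by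
    rw [IsReduced, wordProd_append, hxy, hκ.eq, hμ.eq, length_append]
  rw [← wordProd_append] at h
  have hmem := cs.simple_mem_rightInvSeq_of_isRightDescent h
  rw [rightInvSeq_append, mem_append, mem_map] at hmem
  rcases hmem with ⟨t, ht, hconj⟩ | hmem
  · left
    convert cs.isRightInversion_of_mem_rightInvSeq hκ ht
    rw [← hconj]
    simp [mul_assoc]
  · right
    rw [← isRightInversion_simple_iff_isRightDescent]
    exact cs.isRightInversion_of_mem_rightInvSeq hμ hmem


def IsMinimalInLeftCoset (X : Set B) (w : W) : Prop :=
  ∀ u ∈ Subgroup.closure (cs.simple '' X), ℓ w ≤ ℓ (w * u)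

namespace IsMinimalInLeftCoset

variable {cs} {X Y : Set B} {d : W}

theorem length_mul_mul_simple (hd : cs.IsMinimalInLeftCoset X d) {y : W}
    (hy : y ∈ Subgroup.closure (cs.simple '' X)) {i : B} (hi : i ∈ X)
    (h : ℓ (d * y) = ℓ d + ℓ y) : ℓ (d * (y * s i)) = ℓ d + ℓ (y * s i) := by
  have htri := cs.length_mul_le d (y * s i)
  by_cases hy_desc : cs.IsRightDescent y i
  · have := cs.length_mul_simple (d * y) i
    rw [isRightDescent_iff] at hy_desc
    rw [mul_assoc] at this
    omega
  by_cases hdy_desc : cs.IsRightDescent (d * y) i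
  · exfalso
    rcases cs.isRightInversion_or_isRightDescent_of_length_mul_eq h hdy_desc with hinv | hdesc
    · have hmem : y * s i * y⁻¹ ∈ Subgroup.closure (cs.simple '' X) :=
        mul_mem (mul_mem hy (Subgroup.subset_closure ⟨i, hi, rfl⟩)) (inv_mem hy)
      exact absurd (hd _ hmem) (not_le.mpr hinv.2)
    · exact hy_desc hdesc
  · rw [not_isRightDescent_iff, mul_assoc] at hdy_desc
    rw [not_isRightDescent_iff] at hy_desc
    omega

theorem length_mul (hd : cs.IsMinimalInLeftCoset X d) {y : W}
    (hy : y ∈ Subgroup.closure (cs.simple '' X)) : ℓ (d * y) = ℓ d + ℓ y := by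
  induction hy using Subgroup.closure_induction_right with
  | one => simp
  | mul_right y hy _ hi ih =>
    obtain ⟨i, hi, rfl⟩ := hi
    exact hd.length_mul_mul_simple hy hi ih
  | mul_inv_cancel y hy _ hi ih =>
    obtain ⟨i, hi, rfl⟩ := hi
    rw [inv_simple]
    exact hd.length_mul_mul_simple hy hi ih

theorem mul (hd : cs.IsMinimalInLeftCoset Y d) {e : W} (he : cs.IsMinimalInLeftCoset X e)
    (heY : e ∈ Subgroup.closure (cs.simple '' Y)) (hXY : X ⊆ Y) :
    cs.IsMinimalInLeftCoset X (d * e) := by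
  intro a ha
  have haY := Subgroup.closure_mono (Set.image_mono hXY) ha
  calc ℓ (d * e) ≤ ℓ d + ℓ e := cs.length_mul_le d e
    _ ≤ ℓ d + ℓ (e * a) := Nat.add_le_add_left (he a ha) _
    _ = ℓ (d * e * a) := by rw [mul_assoc, hd.length_mul (mul_mem heY haY)]

theorem eq_one_of_mem (hd : cs.IsMinimalInLeftCoset X d)
    (hX : d ∈ Subgroup.closure (cs.simple '' X)) : d = 1 :=
  cs.length_eq_zero_iff.mp (by simpa using hd _ (inv_mem hX))

end IsMinimalInLeftCoset

end CoxeterSystem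

open CoxeterSystem

theorem salvetti_order_isPartialOrder {B W : Type*} [Group W]
    (M : CoxeterMatrix B) (cs : CoxeterSystem M W) :
    IsPartialOrder
      {p : W × Set B // ((Subgroup.closure (cs.simple '' p.2) : Subgroup W) : Set W).Finite}
      (fun p q =>
        p.1.2 ⊆ q.1.2 ∧
        q.1.1⁻¹ * p.1.1 ∈ Subgroup.closure (cs.simple '' q.1.2) ∧
        ∀ u ∈ Subgroup.closure (cs.simple '' p.1.2),
          cs.length (q.1.1⁻¹ * p.1.1) ≤ cs.length (q.1.1⁻¹ * p.1.1 * u)) := by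
  refine { refl := ?_, trans := ?_, antisymm := ?_ }
  · intro p
    exact ⟨subset_rfl, by simp [one_mem], fun u _ => by simp⟩
  · rintro p q r ⟨hpq, hqp_mem, hqp_min⟩ ⟨hqr, hrq_mem, hrq_min⟩
    have hsplit : r.1.1⁻¹ * p.1.1 = (r.1.1⁻¹ * q.1.1) * (q.1.1⁻¹ * p.1.1) := by group
    refine ⟨hpq.trans hqr, ?_, ?_⟩
    · rw [hsplit]
      exact mul_mem hrq_mem (Subgroup.closure_mono (Set.image_mono hqr) hqp_mem)
    · rw [hsplit]
      exact IsMinimalInLeftCoset.mul (cs := cs) hrq_min hqp_min hqp_mem hpq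
  · rintro p q ⟨hpq, -, hqp_min⟩ ⟨hqp, hpq_mem, -⟩
    have hone : q.1.1⁻¹ * p.1.1 = 1 :=
      IsMinimalInLeftCoset.eq_one_of_mem (cs := cs) hqp_min (by simpa using inv_mem hpq_mem)
    exact Subtype.ext (Prod.ext (inv_mul_eq_one.mp hone).symm (subset_antisymm hpq hqp))
end

section
/- Let (W, S) be a Coxeter system, let T ⊂ S, and let X ⊂ S be such that W_X is finite. Let u ∈ W, and write u = u₀u₁ with u₀ ∈ W_T and u₁ the (T,∅)-minimal element of W_T u. Set X₀ = T ∩ u₁ X u₁^{-1}. Then the subgroup W_{X₀} of W generated by X₀ is finite; that is, X₀ ∈ S_T^f, so the assignment π_T(u, X) = (u₀, X₀) is a well-defined map from W × S^f to W_T × S_T^f. -/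
/-!
Statement 10: Let (W, S) be a Coxeter system, let T ⊆ S, and let X ⊆ S be such that W_X is
finite.  Let u ∈ W, and write u = u₀u₁ with u₀ ∈ W_T and u₁ the (T,∅)-minimal element of
W_T u.  Set X₀ = T ∩ u₁ X u₁⁻¹.  Then the subgroup W_{X₀} of W generated by X₀ is finite;
that is, X₀ ∈ S_T^f, so the assignment π_T(u, X) = (u₀, X₀) is a well-defined map from
W × S^f to W_T × S_T^f.

Here X₀, as a subset of S, is the set of t ∈ T whose simple reflection is of the form
u₁ (simple x) u₁⁻¹ for some x ∈ X, and "(T,∅)-minimal" means of minimal length in the coset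
W_T u₁.
-/

open CoxeterSystem

theorem parabolic_retraction_welldefined {B W : Type*} [Group W]
    (M : CoxeterMatrix B) (cs : CoxeterSystem M W) (T X : Set B)
    (hX : ((Subgroup.closure (cs.simple '' X) : Subgroup W) : Set W).Finite)
    (u u₀ u₁ : W) (hdec : u = u₀ * u₁)
    (hu₀ : u₀ ∈ Subgroup.closure (cs.simple '' T))
    (hu₁ : ∀ x ∈ Subgroup.closure (cs.simple '' T), cs.length u₁ ≤ cs.length (x * u₁)) :
    ((Subgroup.closure
        (cs.simple '' {t | t ∈ T ∧ ∃ x ∈ X, cs.simple t = u₁ * cs.simple x * u₁⁻¹}) :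
      Subgroup W) : Set W).Finite := by
  have h : Subgroup.closure
      (cs.simple '' {t | t ∈ T ∧ ∃ x ∈ X, cs.simple t = u₁ * cs.simple x * u₁⁻¹}) ≤
      (Subgroup.closure (cs.simple '' X)).map (MulAut.conj u₁).toMonoidHom := by
    rw [Subgroup.closure_le]
    rintro w ⟨t, ⟨ht, x, hx, hs⟩, rfl⟩
    exact ⟨cs.simple x, Subgroup.subset_closure ⟨x, hx, rfl⟩, by simp [hs]⟩
  have himg : ((Subgroup.closure (cs.simple '' X)).map
      (MulAut.conj u₁).toMonoidHom : Set W).Finite := by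
    rw [Subgroup.coe_map]
    exact hX.image _
  exact himg.subset h
end

section
/- Let (W, S) be a Coxeter system and T ⊂ S. Let s_1^{ε_1} ⋯ s_ℓ^{ε_ℓ} be a word with s_i ∈ S and ε_i ∈ {±1}. For 0 ≤ i ≤ ℓ set u_i = s_1 s_2 ⋯ s_i ∈ W, and write u_i = v_i w_i with v_i ∈ W_T and w_i the (T,∅)-minimal element of W_T u_i. For 1 ≤ i ≤ ℓ define t_i = w_{i-1} s_i w_{i-1}^{-1} if ε_i = 1, and t_i = w_i s_i w_i^{-1} if ε_i = −1. If t_i ∈ T for all i ∈ {1, …, ℓ}, then s_i ∈ T for all i ∈ {1, …, ℓ}. -/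
/-!
Along the word every `w_i` is `1`: if `w_{i-1} = 1` then `v_i w_i = v_{i-1} s_i`, and either
`s_i = t_i ∈ W_T` or `w_i s_i w_i⁻¹ = t_i ∈ W_T`; in both cases `w_i ∈ W_T`, and the only
`(T,∅)`-minimal element of `W_T` is `1`. Hence `t_i = s_i`, and `s_i ∈ T` because distinct
elements of `S` give distinct simple reflections. The latter is seen in the geometric
representation, where `σ_a σ_b` rotates the pairings with `α_a, α_b` by `2π / m_{ab}`: the sum
`∑_{k<m} (σ_a σ_b)^k x` is orthogonal to `α_a, α_b`, hence fixed, which gives `(σ_a σ_b)^m = 1`.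
-/

lemma Subgroup.mem_of_mul_eq_mul {G : Type*} [Group G] {H : Subgroup G} {v v' w s : G}
    (hv : v ∈ H) (hv' : v' ∈ H) (h : v' * w = v * s) (hs : s ∈ H ∨ w * s * w⁻¹ ∈ H) :
    w ∈ H := by
  rcases hs with hs | hs
  · have hw : w = v'⁻¹ * (v * s) := eq_inv_mul_of_mul_eq h
    rw [hw]
    exact mul_mem (inv_mem hv') (mul_mem hv hs)
  · have hs' : s = v⁻¹ * (v' * w) := eq_inv_mul_of_mul_eq h.symm
    have hw : w = w * s * w⁻¹ * v'⁻¹ * v := by rw [hs']; group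
    rw [hw]
    exact mul_mem (mul_mem hs (inv_mem hv')) hv

namespace CoxeterMatrix

variable {B : Type*} (M : CoxeterMatrix B)

/-- The entry `-cos (π / m)` of the Tits bilinear form; for `M a b = 0`, i.e. `m = ∞`, the junk
value `π / 0 = 0` yields the correct entry `-1`. -/
noncomputable def titsCoeff (a b : B) : ℝ := -Real.cos (Real.pi / M a b)

lemma titsCoeff_self (a : B) : M.titsCoeff a a = 1 := by
  simp [titsCoeff]

lemma titsCoeff_comm (a b : B) : M.titsCoeff a b = M.titsCoeff b a := by
  rw [titsCoeff, titsCoeff, M.symmetric]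

noncomputable def titsPair (a : B) : (B →₀ ℝ) →ₗ[ℝ] ℝ :=
  Finsupp.linearCombination ℝ (M.titsCoeff a)

noncomputable def geomReflection (a : B) : Module.End ℝ (B →₀ ℝ) :=
  LinearMap.id - (2 : ℝ) • (M.titsPair a).smulRight (Finsupp.single a 1)

variable {M}

lemma geomReflection_apply (a : B) (x : B →₀ ℝ) :
    M.geomReflection a x = x - (2 * M.titsPair a x) • Finsupp.single a 1 := by
  simp [geomReflection, mul_smul]

lemma titsPair_single (a b : B) : M.titsPair a (Finsupp.single b 1) = M.titsCoeff a b := by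
  simp [titsPair]

lemma titsPair_geomReflection (a' a : B) (x : B →₀ ℝ) :
    M.titsPair a' (M.geomReflection a x)
      = M.titsPair a' x - 2 * M.titsPair a x * M.titsCoeff a' a := by
  simp only [geomReflection_apply, map_sub, map_smul, smul_eq_mul, titsPair_single]

lemma geomReflection_mul_self (a : B) : M.geomReflection a * M.geomReflection a = 1 := by
  refine LinearMap.ext fun x => ?_
  rw [Module.End.mul_apply, Module.End.one_apply, geomReflection_apply, titsPair_geomReflection,
    titsCoeff_self, geomReflection_apply]
  module

lemma geomReflection_apply_of_titsPair_eq_zero {a : B} {x : B →₀ ℝ} (hx : M.titsPair a x = 0) :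
    M.geomReflection a x = x := by
  simp [geomReflection_apply, hx]

/-- A complex coordinate on the pairings with `α_a` and `α_b`, in which `σ_a σ_b` acts as the
rotation by `2π / M a b`. -/
noncomputable def dihedralCoord (a b : B) (x : B →₀ ℝ) : ℂ :=
  ⟨Real.sin (Real.pi / M a b) * M.titsPair a x,
    Real.cos (Real.pi / M a b) * M.titsPair a x + M.titsPair b x⟩

lemma dihedralCoord_geomReflection_geomReflection (a b : B) (x : B →₀ ℝ) :
    M.dihedralCoord a b (M.geomReflection a (M.geomReflection b x))
      = Complex.exp (2 * Real.pi * Complex.I / M a b) * M.dihedralCoord a b x := by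
  unfold dihedralCoord
  set θ := Real.pi / M a b
  have hexp : 2 * Real.pi * Complex.I / M a b = (2 * θ : ℝ) * Complex.I := by
    push_cast [θ]
    ring
  have hcoeff : M.titsCoeff a b = -Real.cos θ := rfl
  have hcs := Real.cos_sq_add_sin_sq θ
  rw [hexp]
  apply Complex.ext
  · simp only [Complex.mul_re, Complex.exp_ofReal_mul_I_re,
      Complex.exp_ofReal_mul_I_im, titsPair_geomReflection, titsCoeff_self, hcoeff,
      Real.cos_two_mul, Real.sin_two_mul]
    ring
  · simp only [Complex.mul_im, Complex.exp_ofReal_mul_I_re,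
      Complex.exp_ofReal_mul_I_im, titsPair_geomReflection, titsCoeff_self, hcoeff,
      M.titsCoeff_comm b a, Real.cos_two_mul, Real.sin_two_mul]
    linear_combination (-2 * Real.cos θ * M.titsPair a x) * hcs

lemma titsPair_sum_pow_geomReflection_mul_eq_zero {a b : B} (hm : 1 < M a b) (x : B →₀ ℝ) :
    let y := ∑ k ∈ Finset.range (M a b), ((M.geomReflection a * M.geomReflection b) ^ k) x
    M.titsPair a y = 0 ∧ M.titsPair b y = 0 := by
  intro y
  set L := M.geomReflection a * M.geomReflection b
  have hζ := Complex.isPrimitiveRoot_exp (M a b) (by omega)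
  have hpow : ∀ k, M.dihedralCoord a b ((L ^ k) x)
      = Complex.exp (2 * Real.pi * Complex.I / M a b) ^ k * M.dihedralCoord a b x := by
    intro k
    induction k with
    | zero => simp
    | succ k ih =>
      rw [pow_succ', Module.End.mul_apply, Module.End.mul_apply,
        dihedralCoord_geomReflection_geomReflection, ih, pow_succ']
      ring
  have hsum : ∑ k ∈ Finset.range (M a b), M.dihedralCoord a b ((L ^ k) x) = 0 := by
    simp_rw [hpow, ← Finset.sum_mul, hζ.geom_sum_eq_zero hm, zero_mul]
  have hsin : Real.sin (Real.pi / M a b) ≠ 0 := by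
    refine (Real.sin_pos_of_pos_of_lt_pi (by positivity) ?_).ne'
    exact div_lt_self Real.pi_pos (by exact_mod_cast hm)
  have hre := congrArg Complex.re hsum
  have him := congrArg Complex.im hsum
  simp only [Complex.re_sum, Complex.im_sum, dihedralCoord, Complex.zero_re, Complex.zero_im,
    ← Finset.mul_sum, Finset.sum_add_distrib] at hre him
  rw [← map_sum] at hre
  rw [← map_sum, ← map_sum] at him
  have ha : M.titsPair a y = 0 := (mul_eq_zero.mp hre).resolve_left hsin
  refine ⟨ha, ?_⟩
  change Real.cos _ * M.titsPair a y + M.titsPair b y = 0 at him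
  rwa [ha, mul_zero, zero_add] at him

lemma geomReflection_mul_pow_eq_one {a b : B} (hab : a ≠ b) :
    (M.geomReflection a * M.geomReflection b) ^ M a b = 1 := by
  obtain hm0 | hm := Nat.eq_zero_or_pos (M a b)
  · rw [hm0, pow_zero]
  have hm : 1 < M a b := lt_of_le_of_ne hm (M.off_diagonal a b hab).symm
  set L := M.geomReflection a * M.geomReflection b
  have hfix : ∀ x, L (∑ k ∈ Finset.range (M a b), (L ^ k) x)
      = ∑ k ∈ Finset.range (M a b), (L ^ k) x := by
    intro x
    obtain ⟨ha, hb⟩ := titsPair_sum_pow_geomReflection_mul_eq_zero hm x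
    rw [Module.End.mul_apply, geomReflection_apply_of_titsPair_eq_zero hb,
      geomReflection_apply_of_titsPair_eq_zero ha]
  generalize M a b = m at hfix ⊢
  refine sub_eq_zero.mp ((mul_geom_sum L m).symm.trans (LinearMap.ext fun x => ?_))
  change (L - 1) ((∑ k ∈ Finset.range m, L ^ k) x) = 0
  rw [LinearMap.sub_apply, Module.End.one_apply, LinearMap.sum_apply, hfix, sub_self]

lemma isLiftable_geomReflection : M.IsLiftable M.geomReflection := by
  intro a b
  rcases eq_or_ne a b with rfl | hab
  · rw [M.diagonal, pow_one]
    exact geomReflection_mul_self a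
  · exact geomReflection_mul_pow_eq_one hab

end CoxeterMatrix

namespace CoxeterSystem

variable {B W : Type*} [Group W] {M : CoxeterMatrix B} (cs : CoxeterSystem M W)

lemma simple_injective : Function.Injective cs.simple := by
  intro i j hij
  by_contra hne
  have h : M.geomReflection i = M.geomReflection j := by
    rw [← cs.lift_apply_simple M.isLiftable_geomReflection, hij,
      cs.lift_apply_simple M.isLiftable_geomReflection]
  have h2 := congrArg (fun g : Module.End ℝ (B →₀ ℝ) => g (Finsupp.single i 1) i) h
  simp only [CoxeterMatrix.geomReflection_apply, CoxeterMatrix.titsPair_single,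
    CoxeterMatrix.titsCoeff_self, Finsupp.sub_apply, Finsupp.smul_apply, Finsupp.single_eq_same,
    Finsupp.single_eq_of_ne' (Ne.symm hne), smul_eq_mul] at h2
  norm_num at h2


lemma eq_one_of_mem_of_length_le_mul {H : Subgroup W} {w : W}
    (hmin : ∀ x ∈ H, cs.length w ≤ cs.length (x * w)) (hw : w ∈ H) : w = 1 := by
  have h := hmin w⁻¹ (inv_mem hw)
  rwa [inv_mul_cancel, length_one, Nat.le_zero, length_eq_zero_iff] at h

lemma wordProd_take_succ (ω : List B) {n : ℕ} (hn : n < ω.length) :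
    cs.wordProd (ω.take (n + 1)) = cs.wordProd (ω.take n) * cs.simple ω[n] := by
  rw [List.take_succ_eq_append_getElem hn, wordProd_append, wordProd_singleton]

end CoxeterSystem

open CoxeterSystem

theorem letters_mem_of_proj_mem {B W : Type*} [Group W]
    (M : CoxeterMatrix B) (cs : CoxeterSystem M W) (T : Set B)
    (ω : List (B × Bool)) (v w : ℕ → W)
    (hdec : ∀ i ≤ ω.length, cs.wordProd ((ω.take i).map Prod.fst) = v i * w i)
    (hv : ∀ i ≤ ω.length, v i ∈ Subgroup.closure (cs.simple '' T))
    (hw : ∀ i ≤ ω.length, ∀ x ∈ Subgroup.closure (cs.simple '' T),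
      cs.length (w i) ≤ cs.length (x * w i))
    (ht : ∀ j : Fin ω.length,
      (if (ω.get j).2 then w (j : ℕ) * cs.simple (ω.get j).1 * (w (j : ℕ))⁻¹
        else w ((j : ℕ) + 1) * cs.simple (ω.get j).1 * (w ((j : ℕ) + 1))⁻¹)
        ∈ cs.simple '' T) :
    ∀ j : Fin ω.length, (ω.get j).1 ∈ T := by
  have hT : cs.simple '' T ⊆ Subgroup.closure (cs.simple '' T) := Subgroup.subset_closure
  have hw_one : ∀ i ≤ ω.length, w i = 1 := by
    intro i hi
    refine cs.eq_one_of_mem_of_length_le_mul (hw i hi) ?_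
    induction i with
    | zero =>
      have h0 : 1 = v 0 * w 0 := by simpa using hdec 0 hi
      rw [eq_inv_mul_of_mul_eq h0.symm, mul_one]
      exact inv_mem (hv 0 hi)
    | succ n ih =>
      have hn : n < ω.length := hi
      have hw_n := cs.eq_one_of_mem_of_length_le_mul (hw n hn.le) (ih hn.le)
      refine Subgroup.mem_of_mul_eq_mul (s := cs.simple ω[n].1) (hv n hn.le) (hv (n + 1) hi) ?_ ?_
      · rw [← hdec (n + 1) hi, List.map_take, cs.wordProd_take_succ _ (by simpa using hn),
          ← List.map_take, hdec n hn.le, hw_n, mul_one, List.getElem_map]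
      · have htn := ht ⟨n, hn⟩
        split_ifs at htn
        · exact Or.inl (by simpa [hw_n] using hT htn)
        · exact Or.inr (hT htn)
  intro j
  have htj := ht j
  rw [hw_one j j.is_le', hw_one (j + 1) j.isLt] at htj
  simpa [cs.simple_injective.mem_set_image] using htj
end

section
/- Let Γ be a Coxeter graph with vertex set S, let (A, Σ) be its Artin system, and let T ⊂ S. If m ≤ n and T = {s_1, …, s_{m-1}} is the set of the first m−1 vertices of the Coxeter graph A_{n-1}, then for every element α of the subgroup of the Artin group A(A_{n-1}) = B_n generated by σ_{s_1}, …, σ_{s_{m-1}}, one has lg_{Σ}(α) = lg_{Σ_T}(α); that is, the standard embedding B_m ↪ B_n is isometric with respect to the standard generating sets. -/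
/-!
Statement 15: If m ≤ n and T = {s_1, …, s_{m-1}} is the set of the first m−1 vertices of the
Coxeter graph A_{n-1}, then for every element α of the subgroup of the Artin group
A(A_{n-1}) = B_n generated by σ_{s_1}, …, σ_{s_{m-1}}, one has lg_Σ(α) = lg_{Σ_T}(α); that is,
the standard embedding B_m ↪ B_n is isometric with respect to the standard generating sets.

The braid group B_n is the Artin group of the Coxeter graph A_{n-1}, which has n−1 vertices;
we index its generators by `Fin (n-1)`, the generator `σ_k` (1 ≤ k ≤ n−1) corresponding to the
index `k - 1`, so that T corresponds to the set of indices `< m - 1`.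
-/

open CoxeterSystem

variable {B : Type*}

/-- The Artin–Tits relations associated to a Coxeter matrix `M`. -/
def artinRels (M : CoxeterMatrix B) : Set (FreeGroup B) :=
  {r | ∃ s t : B, s ≠ t ∧ M s t ≠ 0 ∧
    r = ((alternatingWord s t (M s t)).map FreeGroup.of).prod *
        (((alternatingWord t s (M s t)).map FreeGroup.of).prod)⁻¹}

/-- The Artin group of the Coxeter graph with Coxeter matrix `M`. -/
abbrev ArtinGroup (M : CoxeterMatrix B) : Type _ := PresentedGroup (artinRels M)

/-- The standard generator `σ_s` of the Artin group. -/
def agen (M : CoxeterMatrix B) (s : B) : ArtinGroup M := PresentedGroup.of s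

/-- The element of the Artin group represented by a word over `Σ ⊔ Σ⁻¹`. -/
def awordProd (M : CoxeterMatrix B) (l : List (B × Bool)) : ArtinGroup M :=
  (l.map fun p => if p.2 then agen M p.1 else (agen M p.1)⁻¹).prod

/-- The length `lg_Σ(α)` with respect to the full standard generating set. -/
noncomputable def alg (M : CoxeterMatrix B) (α : ArtinGroup M) : ℕ :=
  sInf {n | ∃ l : List (B × Bool), awordProd M l = α ∧ l.length = n}

/-- The length `lg_{Σ_T}(α)` with respect to the generators indexed by `T`. -/
noncomputable def algT (M : CoxeterMatrix B) (T : Set B) (α : ArtinGroup M) : ℕ :=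
  sInf {n | ∃ l : List (B × Bool), (∀ p ∈ l, p.1 ∈ T) ∧ awordProd M l = α ∧ l.length = n}

/-- The braid group on `n` strands: the Artin group of the Coxeter graph `A_{n-1}`. -/
abbrev BraidGroup (n : ℕ) : Type _ := ArtinGroup (CoxeterMatrix.Aₙ (n - 1))

namespace BraidIso

/-! ### Positions, states, counting -/

def sw (a : ℕ) : Equiv.Perm ℕ := Equiv.swap a (a + 1)

@[simp] lemma sw_left (a : ℕ) : sw a a = a + 1 := Equiv.swap_apply_left _ _
@[simp] lemma sw_right (a : ℕ) : sw a (a + 1) = a := Equiv.swap_apply_right _ _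
lemma sw_other {a p : ℕ} (h1 : p ≠ a) (h2 : p ≠ a + 1) : sw a p = p :=
  Equiv.swap_apply_of_ne_of_ne h1 h2
@[simp] lemma sw_sw (a p : ℕ) : sw a (sw a p) = p := Equiv.swap_apply_self _ _ _

abbrev St : Type := ℕ → Bool

def stp (a : ℕ) : Equiv.Perm St where
  toFun P := P ∘ sw a
  invFun P := P ∘ sw a
  left_inv P := by funext p; simp
  right_inv P := by funext p; simp

@[simp] lemma stp_apply (a : ℕ) (P : St) : stp a P = P ∘ sw a := rfl
@[simp] lemma stp_symm_apply (a : ℕ) (P : St) : (stp a).symm P = P ∘ sw a := rfl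

def kc (P : St) (q : ℕ) : ℕ := ((Finset.range q).filter (fun p => P p = false)).card

lemma kc_le (P : St) (q : ℕ) : kc P q ≤ q := by
  classical
  calc kc P q ≤ (Finset.range q).card := Finset.card_filter_le _ _
  _ = q := Finset.card_range q

lemma kc_succ (P : St) (q : ℕ) :
    kc P (q + 1) = kc P q + (if P q then 0 else 1) := by
  classical
  unfold kc
  rw [Finset.range_add_one, Finset.filter_insert]
  by_cases h : P q <;> simp [h]

lemma kc_mono (P : St) {q q' : ℕ} (h : q ≤ q') : kc P q ≤ kc P q' := by
  classical
  exact Finset.card_le_card (Finset.filter_subset_filter _ (by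
    intro x hx; simp only [Finset.mem_range] at *; omega))

lemma kc_congr {P P' : St} (q : ℕ) (h : ∀ p < q, P p = P' p) : kc P q = kc P' q := by
  classical
  unfold kc
  congr 1
  apply Finset.filter_congr
  intro x hx
  simp only [Finset.mem_range] at hx
  rw [h x hx]

lemma kc_stp_low {a q : ℕ} (P : St) (h : q ≤ a) : kc (P ∘ sw a) q = kc P q := by
  apply kc_congr
  intro p hp
  simp only [Function.comp_apply]
  rw [sw_other (by omega) (by omega)]

lemma kc_stp_high {a q : ℕ} (P : St) (h : a + 1 < q) : kc (P ∘ sw a) q = kc P q := by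
  classical
  unfold kc
  apply Finset.card_bij (fun p _ => sw a p)
  · intro p hp
    simp only [Finset.mem_filter, Finset.mem_range, Function.comp_apply] at *
    constructor
    · rcases eq_or_ne p a with rfl | h1
      · simp; omega
      rcases eq_or_ne p (a+1) with rfl | h2
      · simp; omega
      · rw [sw_other h1 h2]; exact hp.1
    · exact hp.2
  · intro p1 h1 p2 h2 he
    exact (sw a).injective he
  · intro p hp
    simp only [Finset.mem_filter, Finset.mem_range] at hp
    refine ⟨sw a p, ?_, by simp [sw]⟩
    simp only [Finset.mem_filter, Finset.mem_range, Function.comp_apply]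
    constructor
    · rcases eq_or_ne p a with rfl | h1
      · simp; omega
      rcases eq_or_ne p (a+1) with rfl | h2
      · simp; omega
      · rw [sw_other h1 h2]; exact hp.1
    · simp [hp.2, sw]

/-! ### Relations among the Artin generators -/

lemma rel_one (M : CoxeterMatrix B) {r : FreeGroup B} (h : r ∈ artinRels M) :
    PresentedGroup.mk (artinRels M) r = 1 := by
  have : r ∈ Subgroup.normalClosure (artinRels M) := Subgroup.subset_normalClosure h
  exact (QuotientGroup.eq_one_iff r).2 this

lemma alt2 (s t : B) : alternatingWord s t 2 = [s, t] := rfl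
lemma alt3 (s t : B) : alternatingWord s t 3 = [t, s, t] := rfl

lemma agen_rel_comm (M : CoxeterMatrix B) {s t : B} (hne : s ≠ t) (h2 : M s t = 2) :
    agen M s * agen M t = agen M t * agen M s := by
  have hmem : (((alternatingWord s t (M s t)).map FreeGroup.of).prod *
      (((alternatingWord t s (M s t)).map FreeGroup.of).prod)⁻¹) ∈ artinRels M :=
    ⟨s, t, hne, by rw [h2]; norm_num, rfl⟩
  have := rel_one M hmem
  rw [h2, alt2, alt2] at this
  simp only [List.map_cons, List.map_nil, List.prod_cons, List.prod_nil, mul_one,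
    map_mul, map_inv] at this
  have h := mul_inv_eq_one.mp this
  simpa [agen, PresentedGroup.of] using h

lemma agen_rel_braid (M : CoxeterMatrix B) {s t : B} (hne : s ≠ t) (h3 : M s t = 3) :
    agen M t * agen M s * agen M t = agen M s * agen M t * agen M s := by
  have hmem : (((alternatingWord s t (M s t)).map FreeGroup.of).prod *
      (((alternatingWord t s (M s t)).map FreeGroup.of).prod)⁻¹) ∈ artinRels M :=
    ⟨s, t, hne, by rw [h3]; norm_num, rfl⟩
  have := rel_one M hmem
  rw [h3, alt3, alt3] at this
  simp only [List.map_cons, List.map_nil, List.prod_cons, List.prod_nil, mul_one,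
    map_mul, map_inv] at this
  have h := mul_inv_eq_one.mp this
  simpa [agen, PresentedGroup.of, mul_assoc] using h

lemma An_apply (N : ℕ) (i j : Fin N) :
    CoxeterMatrix.Aₙ N i j =
      if i = j then 1 else (if (j : ℕ) + 1 = i ∨ (i : ℕ) + 1 = j then 3 else 2) := rfl

/-! ### The wreath-type group and the images of the generators -/

variable {N : ℕ}

def actA (N : ℕ) : Equiv.Perm St →* MulAut (St → ArtinGroup (CoxeterMatrix.Aₙ N)) where
  toFun e :=
    { toFun := fun f => f ∘ e.symm
      invFun := fun f => f ∘ e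
      left_inv := fun f => by funext P; simp
      right_inv := fun f => by funext P; simp
      map_mul' := fun f g => rfl }
  map_one' := rfl
  map_mul' e₁ e₂ := rfl

abbrev W (N : ℕ) : Type :=
  SemidirectProduct (St → ArtinGroup (CoxeterMatrix.Aₙ N)) (Equiv.Perm St) (actA N)

def cmp (a : ℕ) (ha : a < N) (P : St) : ArtinGroup (CoxeterMatrix.Aₙ N) :=
  if P a || P (a + 1) then 1
  else agen (CoxeterMatrix.Aₙ N) ⟨kc P a, lt_of_le_of_lt (kc_le P a) ha⟩

def gw (i : Fin N) : W N := ⟨fun P => cmp i i.isLt P, stp i⟩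

/-- normal form for a component value -/
def EE (cond : Bool) {l : ℕ} (hl : l < N) : ArtinGroup (CoxeterMatrix.Aₙ N) :=
  if cond then 1 else agen (CoxeterMatrix.Aₙ N) ⟨l, hl⟩

lemma cmp_eq_EE {a : ℕ} (ha : a < N) (P : St) {cond : Bool} {l : ℕ} (hl : l < N)
    (h0 : (P a || P (a + 1)) = cond) (h1 : kc P a = l) :
    cmp a ha P = EE cond hl := by
  unfold cmp EE
  rw [h0]
  by_cases h : cond <;> simp only [h, if_true, if_false]
  have : (⟨kc P a, lt_of_le_of_lt (kc_le P a) ha⟩ : Fin N) = ⟨l, hl⟩ := Fin.ext h1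
  rw [this]


/-! ### Swap identities -/

set_option maxHeartbeats 1000000 in
lemma sw_braid (a p : ℕ) : sw a (sw (a+1) (sw a p)) = sw (a+1) (sw a (sw (a+1) p)) := by
  simp only [sw, Equiv.swap_apply_def]
  split_ifs <;> omega

set_option maxHeartbeats 1000000 in
lemma sw_comm {a b : ℕ} (hab : a + 2 ≤ b) (p : ℕ) : sw a (sw b p) = sw b (sw a p) := by
  simp only [sw, Equiv.swap_apply_def]
  split_ifs <;> omega

/-! ### Computation helpers in `W` -/

lemma actA_apply (e : Equiv.Perm St) (f : St → ArtinGroup (CoxeterMatrix.Aₙ N)) (P : St) :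
    actA N e f P = f (e.symm P) := rfl

lemma perm_symm_mul (e₁ e₂ : Equiv.Perm St) (P : St) :
    (e₁ * e₂).symm P = e₂.symm (e₁.symm P) := rfl

lemma gw_left (i : Fin N) (P : St) : (gw i).left P = cmp i i.isLt P := rfl

lemma gw_right (i : Fin N) : (gw i).right = stp i := rfl

lemma W_left2 (u v : W N) (P : St) :
    (u * v).left P = u.left P * v.left (u.right.symm P) := by
  rw [SemidirectProduct.mul_left, Pi.mul_apply, actA_apply]

lemma W_left3 (u v w : W N) (P : St) :
    (u * v * w).left P =
      u.left P * v.left (u.right.symm P) * w.left (v.right.symm (u.right.symm P)) := by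
  rw [W_left2, W_left2, SemidirectProduct.mul_right, perm_symm_mul]

/-! ### The commutation relation in `W` -/

lemma gw_comm {a b : ℕ} (ha : a < N) (hb : b < N) (hab : a + 2 ≤ b) :
    gw (N := N) ⟨a, ha⟩ * gw ⟨b, hb⟩ = gw ⟨b, hb⟩ * gw ⟨a, ha⟩ := by
  apply SemidirectProduct.ext
  · funext P
    rw [W_left2, W_left2]
    simp only [gw_left, gw_right, stp_symm_apply]
    show cmp a ha P * cmp b hb (P ∘ sw a) = cmp b hb P * cmp a ha (P ∘ sw b)
    have e2 : cmp b hb (P ∘ sw a) = cmp b hb P := by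
      refine Eq.trans (cmp_eq_EE hb _ (lt_of_le_of_lt (kc_le P b) hb) ?_ ?_)
        (cmp_eq_EE (cond := P b || P (b+1)) hb P _ rfl rfl).symm
      · simp only [Function.comp_apply]
        rw [sw_other (by omega) (by omega), sw_other (by omega) (by omega)]
      · exact kc_stp_high P (by omega)
    have e5 : cmp a ha (P ∘ sw b) = cmp a ha P := by
      refine Eq.trans (cmp_eq_EE ha _ (lt_of_le_of_lt (kc_le P a) ha) ?_ ?_)
        (cmp_eq_EE (cond := P a || P (a+1)) ha P _ rfl rfl).symm
      · simp only [Function.comp_apply]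
        rw [sw_other (by omega) (by omega), sw_other (by omega) (by omega)]
      · exact kc_stp_low P (by omega)
    rw [e2, e5]
    unfold cmp
    rcases hx : P a <;> rcases hy : P (a+1) <;> rcases hu : P b <;> rcases hv : P (b+1) <;>
      simp only [hx, hy, hu, hv, Bool.false_or, Bool.true_or, Bool.or_true, Bool.or_false,
        if_true, if_false, one_mul, mul_one]
    have hcnt : kc P a + 2 ≤ kc P b := by
      have h1 : kc P (a+1) = kc P a + 1 := by rw [kc_succ, hx]; simp
      have h2 : kc P (a+2) = kc P (a+1) + 1 := by
        rw [show a+2 = a+1+1 from rfl, kc_succ, hy]; simp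
      have := kc_mono P (show a + 2 ≤ b by omega)
      omega
    apply agen_rel_comm
    · simp only [ne_eq, Fin.mk.injEq]; omega
    · rw [An_apply]
      rw [if_neg (by simp only [ne_eq, Fin.mk.injEq]; omega)]
      rw [if_neg (by simp only [Fin.val_mk]; omega)]
  · rw [SemidirectProduct.mul_right, SemidirectProduct.mul_right]
    simp only [gw_right]
    apply Equiv.ext
    intro P
    show P ∘ sw b ∘ sw a = P ∘ sw a ∘ sw b
    funext p
    simp only [Function.comp_apply]
    exact congrArg P (sw_comm hab p).symm

/-! ### The braid relation in `W` -/

lemma gw_braid {a : ℕ} (ha : a < N) (hb : a + 1 < N) :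
    gw (N := N) ⟨a, ha⟩ * gw ⟨a+1, hb⟩ * gw ⟨a, ha⟩ =
      gw ⟨a+1, hb⟩ * gw ⟨a, ha⟩ * gw ⟨a+1, hb⟩ := by
  apply SemidirectProduct.ext
  · funext P
    rw [W_left3, W_left3]
    simp only [gw_left, gw_right, stp_symm_apply]
    show cmp a ha P * cmp (a+1) hb (P ∘ sw a) * cmp a ha ((P ∘ sw a) ∘ sw (a+1)) =
      cmp (a+1) hb P * cmp a ha (P ∘ sw (a+1)) * cmp (a+1) hb ((P ∘ sw (a+1)) ∘ sw a)
    have hc1 : kc P a < N := lt_of_le_of_lt (kc_le P a) ha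
    have hc2 : ∀ t : Bool, kc P a + (if t then 0 else 1) < N := by
      intro t; have := kc_le P a; rcases t <;> simp <;> omega
    have e1 : cmp a ha P = EE (P a || P (a+1)) hc1 := cmp_eq_EE ha P hc1 rfl rfl
    have e2 : cmp (a+1) hb (P ∘ sw a) = EE (P a || P (a+2)) (hc2 (P (a+1))) := by
      refine cmp_eq_EE hb _ _ ?_ ?_
      · simp only [Function.comp_apply]
        rw [show sw a (a+1) = a from sw_right a,
          show sw a (a+1+1) = a+2 from sw_other (by omega) (by omega)]
      · rw [kc_succ, kc_stp_low P (le_refl a)]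
        congr 1
        simp only [Function.comp_apply, sw_left]
    have e3 : cmp a ha ((P ∘ sw a) ∘ sw (a+1)) = EE (P (a+1) || P (a+2)) hc1 := by
      refine cmp_eq_EE ha _ _ ?_ ?_
      · simp only [Function.comp_apply]
        rw [show sw (a+1) a = a from sw_other (by omega) (by omega), sw_left,
          show sw (a+1) (a+1) = a+2 from sw_left (a+1),
          show sw a (a+2) = a+2 from sw_other (by omega) (by omega)]
      · rw [kc_stp_low _ (by omega), kc_stp_low P (le_refl a)]
    have e4 : cmp (a+1) hb P = EE (P (a+1) || P (a+2)) (hc2 (P a)) := by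
      refine cmp_eq_EE hb _ _ rfl ?_
      rw [kc_succ]
    have e5 : cmp a ha (P ∘ sw (a+1)) = EE (P a || P (a+2)) hc1 := by
      refine cmp_eq_EE ha _ _ ?_ ?_
      · simp only [Function.comp_apply]
        rw [show sw (a+1) a = a from sw_other (by omega) (by omega),
          show sw (a+1) (a+1) = a+2 from sw_left (a+1)]
      · exact kc_stp_low P (by omega)
    have e6 : cmp (a+1) hb ((P ∘ sw (a+1)) ∘ sw a) = EE (P a || P (a+1)) (hc2 (P (a+2))) := by
      refine cmp_eq_EE hb _ _ ?_ ?_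
      · simp only [Function.comp_apply]
        rw [show sw a (a+1) = a from sw_right a,
          show sw (a+1) a = a from sw_other (by omega) (by omega),
          show sw a (a+1+1) = a+2 from sw_other (by omega) (by omega),
          show sw (a+1) (a+2) = a+1 from sw_right (a+1)]
      · rw [kc_succ, kc_stp_low _ (le_refl a), kc_stp_low P (by omega)]
        congr 1
        simp only [Function.comp_apply, sw_left,
          show sw (a+1) (a+1) = a+2 from sw_left (a+1)]
    rw [e1, e2, e3, e4, e5, e6]
    unfold EE
    rcases hx : P a <;> rcases hy : P (a+1) <;> rcases hz : P (a+2) <;>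
      simp only [hx, hy, hz, Bool.false_or, Bool.true_or, Bool.or_true, Bool.or_false,
        Bool.false_eq_true, Bool.true_eq_false, if_true, if_false, one_mul, mul_one,
        eq_self_iff_true, ite_true, ite_false, Nat.add_zero]
    -- all-kept case: genuine braid relation
    exact agen_rel_braid (CoxeterMatrix.Aₙ N) (s := ⟨kc P a + 1, hc2 false⟩)
      (t := ⟨kc P a, hc1⟩)
      (by simp only [ne_eq, Fin.mk.injEq]; omega)
      (by rw [An_apply, if_neg (by simp only [ne_eq, Fin.mk.injEq]; omega),
            if_pos (by simp only [Fin.val_mk]; exact Or.inl trivial)])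
  · rw [SemidirectProduct.mul_right, SemidirectProduct.mul_right,
      SemidirectProduct.mul_right, SemidirectProduct.mul_right]
    simp only [gw_right]
    apply Equiv.ext
    intro P
    show ((P ∘ sw a) ∘ sw (a+1)) ∘ sw a = ((P ∘ sw (a+1)) ∘ sw a) ∘ sw (a+1)
    funext p
    simp only [Function.comp_apply]
    exact congrArg P (sw_braid a p)


/-! ### Wrappers with `Fin` indices -/

lemma gw_braid' {i j : Fin N} (h : (i : ℕ) + 1 = (j : ℕ)) :
    gw i * gw j * gw i = gw j * gw i * gw j := by
  obtain ⟨a, ha⟩ := i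
  obtain ⟨b, hb⟩ := j
  simp only [Fin.val_mk] at h
  subst h
  exact gw_braid ha hb

lemma gw_comm' {i j : Fin N} (h : (i : ℕ) + 2 ≤ (j : ℕ)) :
    gw i * gw j = gw j * gw i := by
  obtain ⟨a, ha⟩ := i
  obtain ⟨b, hb⟩ := j
  exact gw_comm ha hb h

/-! ### The homomorphism `Φ` -/

lemma gw_rels : ∀ r ∈ artinRels (CoxeterMatrix.Aₙ N), (FreeGroup.lift gw) r = 1 := by
  rintro r ⟨s, t, hne, hM0, rfl⟩
  have hlift : ∀ (l : List (Fin N)),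
      FreeGroup.lift gw ((l.map FreeGroup.of).prod) = (l.map gw).prod := by
    intro l
    rw [map_list_prod, List.map_map]
    congr 1
    apply List.map_congr_left
    intro x _
    exact FreeGroup.lift_apply_of
  by_cases hadj : ((t : ℕ) + 1 = (s : ℕ) ∨ (s : ℕ) + 1 = (t : ℕ))
  · have h3 : CoxeterMatrix.Aₙ N s t = 3 := by
      rw [An_apply, if_neg hne, if_pos hadj]
    rw [h3, alt3, alt3, map_mul, map_inv, hlift, hlift]
    simp only [List.map_cons, List.map_nil, List.prod_cons, List.prod_nil, mul_one]
    rw [mul_inv_eq_one, ← mul_assoc, ← mul_assoc]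
    rcases hadj with h | h
    · exact gw_braid' h
    · exact (gw_braid' h).symm
  · have h2 : CoxeterMatrix.Aₙ N s t = 2 := by
      rw [An_apply, if_neg hne, if_neg hadj]
    rw [h2, alt2, alt2, map_mul, map_inv, hlift, hlift]
    simp only [List.map_cons, List.map_nil, List.prod_cons, List.prod_nil, mul_one]
    rw [mul_inv_eq_one]
    push_neg at hadj
    have hne' : (s : ℕ) ≠ (t : ℕ) := fun h => hne (Fin.ext h)
    rcases lt_or_gt_of_ne hne' with h | h
    · exact gw_comm' (by omega)
    · exact (gw_comm' (by omega)).symm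

def Φ (N : ℕ) : ArtinGroup (CoxeterMatrix.Aₙ N) →* W N :=
  PresentedGroup.toGroup gw_rels

lemma Φ_agen (s : Fin N) : Φ N (agen (CoxeterMatrix.Aₙ N) s) = gw s :=
  PresentedGroup.toGroup.of gw_rels

/-! ### Word lemmas -/

lemma awordProd_nil (M : CoxeterMatrix B) : awordProd M [] = 1 := rfl

lemma awordProd_cons (M : CoxeterMatrix B) (p : B × Bool) (l : List (B × Bool)) :
    awordProd M (p :: l) =
      (if p.2 then agen M p.1 else (agen M p.1)⁻¹) * awordProd M l := by
  simp [awordProd]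

lemma awordProd_append (M : CoxeterMatrix B) (l₁ l₂ : List (B × Bool)) :
    awordProd M (l₁ ++ l₂) = awordProd M l₁ * awordProd M l₂ := by
  simp [awordProd]

lemma awordProd_revflip (M : CoxeterMatrix B) (l : List (B × Bool)) :
    awordProd M (l.reverse.map (fun p => (p.1, !p.2))) = (awordProd M l)⁻¹ := by
  induction l with
  | nil => simp [awordProd]
  | cons a l ih =>
    rw [List.reverse_cons, List.map_append, awordProd_append, ih, awordProd_cons,
      mul_inv_rev]
    congr 1
    rcases hb : a.2 <;> simp [awordProd, hb]

/-! ### Inverse and step computations in `W` -/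

lemma winv_left (u : W N) (P : St) : (u⁻¹).left P = (u.left (u.right P))⁻¹ := rfl

lemma winv_right_symm (u : W N) (P : St) : ((u⁻¹).right).symm P = u.right P := rfl

lemma cmp_stp_self {a : ℕ} (ha : a < N) (P : St) :
    cmp a ha (P ∘ sw a) = cmp a ha P := by
  refine Eq.trans (cmp_eq_EE ha _ (lt_of_le_of_lt (kc_le P a) ha) ?_ ?_)
    (cmp_eq_EE (cond := P a || P (a+1)) ha P _ rfl rfl).symm
  · simp only [Function.comp_apply, sw_left, sw_right]
    exact Bool.or_comm _ _
  · exact kc_stp_low P (le_refl a)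

lemma step (s : Fin N) (b : Bool) (β : ArtinGroup (CoxeterMatrix.Aₙ N)) (P : St) :
    (Φ N ((if b then agen (CoxeterMatrix.Aₙ N) s else (agen (CoxeterMatrix.Aₙ N) s)⁻¹) * β)).left P
      = (if b then cmp s s.isLt P else (cmp s s.isLt P)⁻¹) *
        (Φ N β).left (P ∘ sw s) := by
  rcases b with _ | _
  · simp only [Bool.false_eq_true, if_false, ite_false, map_mul, map_inv, Φ_agen]
    rw [W_left2, winv_left, winv_right_symm, gw_right, gw_left, stp_apply, cmp_stp_self]
  · simp only [eq_self_iff_true, if_true, ite_true, map_mul, Φ_agen]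
    rw [W_left2]
    rw [gw_right, gw_left, stp_symm_apply]

/-! ### The invariant and the transfer lemma -/

def StInv (k : ℕ) (P : St) : Prop := ∀ q, kc P q ≤ k + 1

lemma stinv_stp (k a : ℕ) {P : St} (h : StInv k P) : StInv k (P ∘ sw a) := by
  intro q
  rcases le_or_gt q (a + 1) with hq | hq
  · refine le_trans (kc_mono _ (show q ≤ a + 2 by omega)) ?_
    rw [kc_stp_high P (by omega)]
    exact h _
  · rw [kc_stp_high P hq]
    exact h q

lemma main_trans (k : ℕ) (l : List (Fin N × Bool)) :
    ∀ (P : St), StInv k P →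
    ∃ l' : List (Fin N × Bool), (∀ p ∈ l', (p.1 : ℕ) < k) ∧
      awordProd (CoxeterMatrix.Aₙ N) l' = (Φ N (awordProd (CoxeterMatrix.Aₙ N) l)).left P ∧
      l'.length ≤ l.length := by
  induction l with
  | nil =>
    intro P _
    refine ⟨[], by simp, ?_, by simp⟩
    rw [awordProd_nil, map_one]
    rfl
  | cons p l ih =>
    obtain ⟨s, b⟩ := p
    intro P hP
    obtain ⟨l', hT, hprod, hlen⟩ := ih (P ∘ sw s) (stinv_stp k s hP)
    rw [awordProd_cons]
    by_cases hc : (P s || P ((s : ℕ) + 1)) = true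
    · refine ⟨l', hT, ?_, by simpa using Nat.le_succ_of_le hlen⟩
      rw [step, hprod]
      have : cmp s s.isLt P = 1 := by unfold cmp; rw [if_pos hc]
      rcases b <;> simp [this]
    · have hs0 : P s = false := by
        rcases hx : P (s : ℕ) <;> simp [hx] at hc ⊢
      have hs1 : P ((s : ℕ) + 1) = false := by
        rcases hx : P ((s : ℕ) + 1) <;> simp [hx] at hc ⊢
      have hkc : kc P s + 2 ≤ k + 1 := by
        have h1 : kc P ((s : ℕ) + 1) = kc P s + 1 := by rw [kc_succ, hs0]; simp
        have h2 : kc P ((s : ℕ) + 2) = kc P ((s : ℕ) + 1) + 1 := by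
          rw [show (s : ℕ) + 2 = (s : ℕ) + 1 + 1 from rfl, kc_succ, hs1]; simp
        have := hP ((s : ℕ) + 2)
        omega
      have hkN : kc P s < N := lt_of_le_of_lt (kc_le P s) s.isLt
      refine ⟨(⟨kc P s, hkN⟩, b) :: l', ?_, ?_, by simpa using hlen⟩
      · intro p hp
        rcases List.mem_cons.mp hp with rfl | hp2
        · simp only [Fin.val_mk]; omega
        · exact hT p hp2
      · rw [awordProd_cons, step, hprod]
        have : cmp s s.isLt P = agen (CoxeterMatrix.Aₙ N) ⟨kc P s, hkN⟩ := by
          unfold cmp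
          rw [if_neg (by simp [hc])]
        rw [this]

/-! ### The base state -/

def P0 (k : ℕ) : St := fun p => decide (k + 1 ≤ p)

lemma stinv_P0 (k : ℕ) : StInv k (P0 k) := by
  intro q
  unfold kc
  calc ((Finset.range q).filter (fun p => P0 k p = false)).card
      ≤ (Finset.range (k + 1)).card := by
        apply Finset.card_le_card
        intro x hx
        simp only [Finset.mem_filter, Finset.mem_range, P0, decide_eq_false_iff_not,
          not_le] at hx ⊢
        exact hx.2
  _ = k + 1 := Finset.card_range _

lemma P0_low {k p : ℕ} (h : p ≤ k) : P0 k p = false := by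
  simp [P0]; omega

lemma kc_P0 {k s : ℕ} (h : s ≤ k + 1) : kc (P0 k) s = s := by
  unfold kc
  rw [Finset.filter_true_of_mem, Finset.card_range]
  intro x hx
  simp only [Finset.mem_range] at hx
  exact P0_low (by omega)

lemma phi_fix (k : ℕ) {α : ArtinGroup (CoxeterMatrix.Aₙ N)}
    (hα : α ∈ Subgroup.closure (agen (CoxeterMatrix.Aₙ N) '' {i : Fin N | (i : ℕ) < k})) :
    (Φ N α).left (P0 k) = α ∧ ((Φ N α).right).symm (P0 k) = P0 k := by
  induction hα using Subgroup.closure_induction with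
  | mem x hx =>
    obtain ⟨s, hs, rfl⟩ := hx
    simp only [Set.mem_setOf_eq] at hs
    rw [Φ_agen]
    constructor
    · rw [gw_left]
      unfold cmp
      rw [if_neg (by rw [P0_low (by omega), P0_low (by omega)]; simp)]
      have : (⟨kc (P0 k) s, lt_of_le_of_lt (kc_le (P0 k) s) s.isLt⟩ : Fin N) = s := by
        apply Fin.ext
        simp only [Fin.val_mk]
        exact kc_P0 (by omega)
      rw [this]
    · rw [gw_right, stp_symm_apply]
      funext p
      simp only [Function.comp_apply]
      rcases eq_or_ne p s with rfl | h1
      · rw [sw_left, P0_low (by omega), P0_low (by omega)]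
      rcases eq_or_ne p ((s : ℕ) + 1) with rfl | h2
      · rw [sw_right, P0_low (by omega), P0_low (by omega)]
      · rw [sw_other h1 h2]
  | one =>
    constructor
    · rw [map_one]; rfl
    · rw [map_one]; rfl
  | mul x y hx hy ihx ihy =>
    rw [map_mul]
    constructor
    · rw [W_left2, ihx.2, ihx.1, ihy.1]
    · rw [SemidirectProduct.mul_right, perm_symm_mul, ihx.2, ihy.2]
  | inv x hx ih =>
    rw [map_inv]
    have hr : (Φ N x).right (P0 k) = P0 k := by
      conv_lhs => rw [← ih.2]
      exact (Φ N x).right.apply_symm_apply _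
    constructor
    · rw [winv_left, hr, ih.1]
    · rw [winv_right_symm, hr]

/-! ### Representing every element by a word -/

lemma exists_word (α : ArtinGroup (CoxeterMatrix.Aₙ N)) :
    ∃ l : List (Fin N × Bool), awordProd (CoxeterMatrix.Aₙ N) l = α := by
  have hmem : α ∈ Subgroup.closure
      (Set.range (PresentedGroup.of : Fin N → ArtinGroup (CoxeterMatrix.Aₙ N))) := by
    rw [PresentedGroup.closure_range_of]
    trivial
  induction hmem using Subgroup.closure_induction with
  | mem x hx =>
    obtain ⟨s, rfl⟩ := hx
    exact ⟨[(s, true)], by simp [awordProd, agen]⟩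
  | one => exact ⟨[], rfl⟩
  | mul x y hx hy ihx ihy =>
    obtain ⟨l₁, h₁⟩ := ihx
    obtain ⟨l₂, h₂⟩ := ihy
    exact ⟨l₁ ++ l₂, by rw [awordProd_append, h₁, h₂]⟩
  | inv x hx ih =>
    obtain ⟨l, h⟩ := ih
    exact ⟨l.reverse.map (fun p => (p.1, !p.2)), by rw [awordProd_revflip, h]⟩

lemma exists_wordT (k : ℕ) {α : ArtinGroup (CoxeterMatrix.Aₙ N)}
    (hα : α ∈ Subgroup.closure (agen (CoxeterMatrix.Aₙ N) '' {i : Fin N | (i : ℕ) < k})) :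
    ∃ l : List (Fin N × Bool), (∀ p ∈ l, (p.1 : ℕ) < k) ∧
      awordProd (CoxeterMatrix.Aₙ N) l = α := by
  induction hα using Subgroup.closure_induction with
  | mem x hx =>
    obtain ⟨s, hs, rfl⟩ := hx
    simp only [Set.mem_setOf_eq] at hs
    exact ⟨[(s, true)], by simpa using hs, by simp [awordProd]⟩
  | one => exact ⟨[], by simp, rfl⟩
  | mul x y hx hy ihx ihy =>
    obtain ⟨l₁, hT₁, h₁⟩ := ihx
    obtain ⟨l₂, hT₂, h₂⟩ := ihy
    refine ⟨l₁ ++ l₂, ?_, by rw [awordProd_append, h₁, h₂]⟩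
    intro p hp
    rcases List.mem_append.mp hp with hp | hp
    · exact hT₁ p hp
    · exact hT₂ p hp
  | inv x hx ih =>
    obtain ⟨l, hT, h⟩ := ih
    refine ⟨l.reverse.map (fun p => (p.1, !p.2)), ?_, by rw [awordProd_revflip, h]⟩
    intro p hp
    simp only [List.mem_map, List.mem_reverse] at hp
    obtain ⟨q, hq, rfl⟩ := hp
    exact hT q hq


end BraidIso

/-- The standard embedding `B_m ↪ B_n` is isometric with respect to the standard generating
sets. -/
theorem braid_isometric (m n : ℕ) (hm : 0 < m) (hmn : m ≤ n)
    (α : BraidGroup n)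
    (hα : α ∈ Subgroup.closure
      (agen (CoxeterMatrix.Aₙ (n - 1)) '' {i : Fin (n - 1) | (i : ℕ) < m - 1})) :
    alg (CoxeterMatrix.Aₙ (n - 1)) α =
      algT (CoxeterMatrix.Aₙ (n - 1)) {i : Fin (n - 1) | (i : ℕ) < m - 1} α := by
  apply le_antisymm
  · -- `alg ≤ algT` : a `T`-word is in particular a word
    obtain ⟨l, hT, hl⟩ := BraidIso.exists_wordT (N := n - 1) (m - 1) hα
    have hne : {x | ∃ l : List (Fin (n - 1) × Bool),
        (∀ p ∈ l, p.1 ∈ {i : Fin (n - 1) | (i : ℕ) < m - 1}) ∧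
        awordProd (CoxeterMatrix.Aₙ (n - 1)) l = α ∧ l.length = x}.Nonempty :=
      ⟨l.length, l, fun p hp => hT p hp, hl, rfl⟩
    have hmem : algT (CoxeterMatrix.Aₙ (n - 1)) {i : Fin (n - 1) | (i : ℕ) < m - 1} α ∈
        {x | ∃ l : List (Fin (n - 1) × Bool),
          (∀ p ∈ l, p.1 ∈ {i : Fin (n - 1) | (i : ℕ) < m - 1}) ∧
          awordProd (CoxeterMatrix.Aₙ (n - 1)) l = α ∧ l.length = x} :=
      Nat.sInf_mem hne
    obtain ⟨l₀, _, hl₀, hlen₀⟩ := hmem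
    exact Nat.sInf_le ⟨l₀, hl₀, hlen₀⟩
  · -- `algT ≤ alg` : transfer an arbitrary word via `Φ`
    obtain ⟨l₁, hl₁⟩ := BraidIso.exists_word α
    have hne : {x | ∃ l : List (Fin (n - 1) × Bool),
        awordProd (CoxeterMatrix.Aₙ (n - 1)) l = α ∧ l.length = x}.Nonempty :=
      ⟨l₁.length, l₁, hl₁, rfl⟩
    have hmem : alg (CoxeterMatrix.Aₙ (n - 1)) α ∈
        {x | ∃ l : List (Fin (n - 1) × Bool),
          awordProd (CoxeterMatrix.Aₙ (n - 1)) l = α ∧ l.length = x} :=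
      Nat.sInf_mem hne
    obtain ⟨l, hl, hlen⟩ := hmem
    obtain ⟨l', hT', hprod', hlen'⟩ :=
      BraidIso.main_trans (m - 1) l (BraidIso.P0 (m - 1)) (BraidIso.stinv_P0 (m - 1))
    have hfix := (BraidIso.phi_fix (m - 1) hα).1
    rw [hl, hfix] at hprod'
    calc algT (CoxeterMatrix.Aₙ (n - 1)) {i : Fin (n - 1) | (i : ℕ) < m - 1} α
        ≤ l'.length := Nat.sInf_le ⟨l', fun p hp => hT' p hp, hprod', rfl⟩
    _ ≤ l.length := hlen'
    _ = alg (CoxeterMatrix.Aₙ (n - 1)) α := hlen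
end
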